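/- Let X₁,...,X_d be independent standard normal random variables. For every ε > 0 there exists c > 0 (independent of d and of the weights) such that for all d and all weights α₁ ≥ ... ≥ α_d > 0 with Σ_j α_j = 1, it holds that P(Σ_{j=1}^d α_j X_j² ≤ c) ≤ ε. -/

import Mathlib

/-!
Chernoff bound for the lower tail of `S = ∑ αⱼ Xⱼ²`: for `s ≥ 0`,
`P(S ≤ c) ≤ e^{sc} 𝔼 e^{-sS} = e^{sc} ∏ⱼ (1 + 2sαⱼ)^{-1/2} ≤ e^{sc} (1 + 2s)^{-1/2}`,
because `∏ⱼ (1 + xⱼ) ≥ 1 + ∑ⱼ xⱼ` for `xⱼ ≥ 0` and `∑ αⱼ = 1`. Taking `s = 2 / ε²` and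
`c = log 2 / s` gives the bound `2 / √(1 + 4 / ε²) ≤ ε`.
-/

open MeasureTheory ProbabilityTheory Real

theorem Finset.one_add_sum_le_prod_one_add {ι R : Type*} [CommSemiring R] [PartialOrder R]
    [IsOrderedRing R] (s : Finset ι) {f : ι → R} (hf : ∀ i ∈ s, 0 ≤ f i) :
    1 + ∑ i ∈ s, f i ≤ ∏ i ∈ s, (1 + f i) := by
  classical
  induction s using Finset.induction_on with
  | empty => simp
  | insert a s ha ih =>
    rw [Finset.sum_insert ha, Finset.prod_insert ha]
    have hfa : 0 ≤ f a := hf a (Finset.mem_insert_self a s)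
    have hfs : ∀ i ∈ s, 0 ≤ f i := fun i hi ↦ hf i (Finset.mem_insert_of_mem hi)
    calc 1 + (f a + ∑ i ∈ s, f i)
        ≤ 1 + (f a + ∑ i ∈ s, f i) + f a * ∑ i ∈ s, f i :=
          le_add_of_nonneg_right (mul_nonneg hfa (Finset.sum_nonneg hfs))
      _ = (1 + f a) * (1 + ∑ i ∈ s, f i) := by ring
      _ ≤ (1 + f a) * ∏ i ∈ s, (1 + f i) := by gcongr; exacts [add_nonneg zero_le_one hfa, ih hfs]

theorem prod_inv_sqrt_one_add_le {ι : Type*} (s : Finset ι) {x : ι → ℝ} (hx : ∀ i ∈ s, 0 ≤ x i) :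
    ∏ i ∈ s, (√(1 + x i))⁻¹ ≤ (√(1 + ∑ i ∈ s, x i))⁻¹ := by
  rw [Finset.prod_inv_distrib, ← Real.sqrt_prod s fun i hi ↦ by linarith [hx i hi]]
  exact inv_anti₀ (sqrt_pos.2 (by linarith [Finset.sum_nonneg hx]))
    (sqrt_le_sqrt (s.one_add_sum_le_prod_one_add hx))

theorem mgf_sq_gaussianReal {t : ℝ} (ht : t < 1 / 2) :
    mgf (fun x ↦ x ^ 2) (gaussianReal 0 1) t = (√(1 - 2 * t))⁻¹ := by
  have hexp (x : ℝ) : gaussianPDFReal 0 1 x • exp (t * x ^ 2)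
      = (√(2 * π))⁻¹ * exp (-(1 / 2 - t) * x ^ 2) := by
    rw [gaussianPDFReal_def, smul_eq_mul, mul_assoc, ← exp_add]
    simp only [NNReal.coe_one, mul_one, sub_zero]
    ring_nf
  rw [mgf, integral_gaussianReal_eq_integral_smul one_ne_zero]
  simp_rw [hexp]
  rw [integral_const_mul, integral_gaussian, sqrt_div pi_pos.le,
    show 1 - 2 * t = 2 * (1 / 2 - t) by ring, sqrt_mul zero_le_two, sqrt_mul zero_le_two]
  have : 0 < √(1 / 2 - t) := sqrt_pos.2 (by linarith)
  have : 0 < √π := sqrt_pos.2 pi_pos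
  field_simp

section WeightedChiSquare

variable {Ω ι : Type*} [MeasurableSpace Ω] {μ : Measure Ω}

theorem mgf_const_mul_sq_of_map_eq_gaussianReal {X : Ω → ℝ} (hX : AEMeasurable X μ)
    (hlaw : μ.map X = gaussianReal 0 1) (a : ℝ) {t : ℝ} (ht : a * t < 1 / 2) :
    mgf (fun ω ↦ a * X ω ^ 2) μ t = (√(1 - 2 * (a * t)))⁻¹ := by
  rw [mgf_const_mul, ← mgf_sq_gaussianReal ht, ← hlaw, mgf_map hX (by fun_prop)]
  rfl

variable [Fintype ι] {X : ι → Ω → ℝ}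

theorem mgf_sum_mul_sq_of_iIndepFun (hX : ∀ i, Measurable (X i))
    (hlaw : ∀ i, μ.map (X i) = gaussianReal 0 1) (hind : iIndepFun X μ) (α : ι → ℝ) {t : ℝ}
    (ht : ∀ i, α i * t < 1 / 2) :
    mgf (fun ω ↦ ∑ i, α i * X i ω ^ 2) μ t = ∏ i, (√(1 - 2 * (α i * t)))⁻¹ := by
  have hind' : iIndepFun (fun i ω ↦ α i * X i ω ^ 2) μ :=
    hind.comp (fun i x ↦ α i * x ^ 2) fun i ↦ by fun_prop
  have hsum : (fun ω ↦ ∑ i, α i * X i ω ^ 2) = ∑ i, fun ω ↦ α i * X i ω ^ 2 := by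
    ext ω
    simp only [Finset.sum_apply]
  rw [hsum, hind'.mgf_sum (fun i ↦ by fun_prop) Finset.univ]
  exact Finset.prod_congr rfl fun i _ ↦
    mgf_const_mul_sq_of_map_eq_gaussianReal (hX i).aemeasurable (hlaw i) (α i) (ht i)

theorem measureReal_sum_mul_sq_le_le_exp_div_sqrt (hX : ∀ i, Measurable (X i))
    (hlaw : ∀ i, μ.map (X i) = gaussianReal 0 1) (hind : iIndepFun X μ) {α : ι → ℝ}
    (hα : ∀ i, 0 ≤ α i) (hsum : ∑ i, α i = 1) {s : ℝ} (hs : 0 ≤ s) (c : ℝ) :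
    μ.real {ω | ∑ i, α i * X i ω ^ 2 ≤ c} ≤ exp (s * c) / √(1 + 2 * s) := by
  have := hind.isProbabilityMeasure
  have hsα (i : ι) : 0 ≤ 2 * s * α i := mul_nonneg (mul_nonneg zero_le_two hs) (hα i)
  have hmgf : mgf (fun ω ↦ ∑ i, α i * X i ω ^ 2) μ (-s) = ∏ i, (√(1 + 2 * s * α i))⁻¹ := by
    rw [mgf_sum_mul_sq_of_iIndepFun hX hlaw hind α fun i ↦ by nlinarith [hα i]]
    congr with i
    ring_nf
  have hint : Integrable (fun ω ↦ exp (-s * ∑ i, α i * X i ω ^ 2)) μ := by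
    refine mgf_pos_iff.1 (hmgf ▸ Finset.prod_pos fun i _ ↦ ?_)
    have := hsα i
    positivity
  calc μ.real {ω | ∑ i, α i * X i ω ^ 2 ≤ c}
      ≤ exp (-(-s) * c) * mgf (fun ω ↦ ∑ i, α i * X i ω ^ 2) μ (-s) :=
        measure_le_le_exp_mul_mgf c (neg_nonpos.2 hs) hint
    _ = exp (s * c) * ∏ i, (√(1 + 2 * s * α i))⁻¹ := by rw [neg_neg, hmgf]
    _ ≤ exp (s * c) * (√(1 + ∑ i, 2 * s * α i))⁻¹ := by
        gcongr
        exact prod_inv_sqrt_one_add_le _ fun i _ ↦ hsα i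
    _ = exp (s * c) / √(1 + 2 * s) := by rw [← Finset.mul_sum, hsum, mul_one, div_eq_mul_inv]

end WeightedChiSquare

/-- Uniform anti-concentration: for every `ε > 0` there is `c > 0`, independent of the
dimension and the weights, such that `P(∑ αⱼ Xⱼ² ≤ c) ≤ ε` for all i.i.d. standard
normals `X₁,…,X_d` and decreasing positive weights summing to one. -/
theorem stmt_11 :
    ∀ ε : ℝ, 0 < ε → ∃ c : ℝ, 0 < c ∧
      ∀ (Ω : Type) (_ : MeasurableSpace Ω) (μ : Measure Ω), IsProbabilityMeasure μ →
        ∀ (d : ℕ), 0 < d → ∀ (X : Fin d → Ω → ℝ),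
          (∀ i, Measurable (X i)) →
          (∀ i, Measure.map (X i) μ = gaussianReal 0 1) →
          iIndepFun X μ →
          ∀ (α : Fin d → ℝ), Antitone α → (∀ j, 0 < α j) → (∑ j, α j = 1) →
            μ {ω | ∑ j, α j * (X j ω) ^ 2 ≤ c} ≤ ENNReal.ofReal ε := by
  intro ε hε
  set s : ℝ := 2 / ε ^ 2 with hs
  refine ⟨log 2 / s, by positivity, ?_⟩
  intro Ω _ μ _ d _ X hX hlaw hind α _ hα hsum
  have hsqrt : 2 / ε ≤ √(1 + 2 * s) := by
    have : (2 / ε) ^ 2 = 2 * s := by rw [hs]; ring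
    exact le_sqrt_of_sq_le (by linarith)
  rw [← ofReal_measureReal]
  refine ENNReal.ofReal_le_ofReal <| (measureReal_sum_mul_sq_le_le_exp_div_sqrt hX hlaw hind
    (fun j ↦ (hα j).le) hsum (s := s) (by positivity) _).trans ?_
  rw [mul_div_cancel₀ _ (by positivity), exp_log two_pos, div_le_iff₀ (by positivity)]
  exact (div_le_iff₀' hε).1 hsqrt
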